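/- Let (X, Y) be standard bivariate normal random variables with correlation ρ ∈ (-1,1). Then P(X > 0 and Y > 0) = 1/4 + arcsin(ρ)/(2π). -/

import Mathlib

open MeasureTheory ProbabilityTheory

section SheppardAux
open Real Set Filter MeasureTheory

namespace Sheppard

noncomputable def g : ℝ → ℝ := gaussianPDFReal 0 1

lemma g_def (x : ℝ) : g x = (√(2 * π))⁻¹ * Real.exp (-(x ^ 2 / 2)) := by
  simp only [g, gaussianPDFReal, NNReal.coe_one, mul_one, sub_zero]
  rw [neg_div]

lemma radial_integral : ∫ r in Ioi (0:ℝ), r * Real.exp (-(r ^ 2 / 2)) = 1 := by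
  have h : ∀ x ∈ Ici (0:ℝ), HasDerivAt (fun r => -Real.exp (-(r ^ 2 / 2)))
      (x * Real.exp (-(x ^ 2 / 2))) x := by
    intro x _
    have h1 : HasDerivAt (fun r : ℝ => -(r ^ 2 / 2)) (-x) x := by
      simpa using ((hasDerivAt_pow 2 x).div_const 2).fun_neg
    have := (h1.exp).fun_neg
    exact this.congr_deriv (by ring)
  have hint : IntegrableOn (fun r : ℝ => r * Real.exp (-(r ^ 2 / 2))) (Ioi 0) := by
    have := (integrable_mul_exp_neg_mul_sq (b := 1/2) (by norm_num)).integrableOn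
      (s := Ioi (0:ℝ))
    convert this using 2 with r
    ring_nf
  have htend : Tendsto (fun r : ℝ => -Real.exp (-(r ^ 2 / 2))) atTop (nhds 0) := by
    rw [← neg_zero]
    refine Tendsto.neg ?_
    refine Real.tendsto_exp_atBot.comp ?_
    have : Tendsto (fun r : ℝ => r ^ 2 / 2) atTop atTop :=
      (tendsto_pow_atTop (by norm_num)).atTop_div_const (by norm_num)
    exact tendsto_neg_atTop_atBot.comp this
  have := integral_Ioi_of_hasDerivAt_of_tendsto' h hint htend
  simpa using this


lemma angle_iff {θ : ℝ} (hθ : θ ∈ Ioo (-(π/2)) (π/2)) {r φ : ℝ} (hr : 0 < r)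
    (hφ : φ ∈ Ioo (-π) π) :
    (0 < r * Real.cos φ ∧ 0 < Real.sin θ * (r * Real.cos φ) + Real.cos θ * (r * Real.sin φ)) ↔
      φ ∈ Ioo (-θ) (π/2) := by
  obtain ⟨hθ1, hθ2⟩ := hθ
  obtain ⟨hφ1, hφ2⟩ := hφ
  have key : Real.sin θ * (r * Real.cos φ) + Real.cos θ * (r * Real.sin φ)
      = r * Real.sin (θ + φ) := by rw [Real.sin_add]; ring
  rw [key]
  constructor
  · rintro ⟨h1, h2⟩
    have hcos : 0 < Real.cos φ := by nlinarith
    have hsin : 0 < Real.sin (θ + φ) := by nlinarith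
    have hφa : -(π/2) < φ := by
      by_contra h
      push_neg at h
      have : Real.cos (-φ) ≤ 0 :=
        Real.cos_nonpos_of_pi_div_two_le_of_le (by linarith) (by nlinarith [Real.pi_pos])
      rw [Real.cos_neg] at this
      linarith
    have hφb : φ < π/2 := by
      by_contra h
      push_neg at h
      have : Real.cos φ ≤ 0 :=
        Real.cos_nonpos_of_pi_div_two_le_of_le (by linarith) (by nlinarith [Real.pi_pos])
      linarith
    refine ⟨?_, hφb⟩
    by_contra h
    push_neg at h
    have : Real.sin (θ + φ) ≤ 0 :=
      Real.sin_nonpos_of_nonpos_of_neg_pi_le (by linarith) (by linarith)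
    linarith
  · rintro ⟨h1, h2⟩
    have hφ1' : -(π/2) < φ := lt_of_le_of_lt (by linarith) h1
    have hcos : 0 < Real.cos φ := Real.cos_pos_of_mem_Ioo ⟨hφ1', h2⟩
    refine ⟨mul_pos hr hcos, mul_pos hr (Real.sin_pos_of_pos_of_lt_pi (by linarith) (by linarith))⟩

lemma gauss_prod :
    (gaussianReal 0 1).prod (gaussianReal 0 1) =
      (volume : Measure (ℝ × ℝ)).withDensity
        (fun p => ENNReal.ofReal (g p.1 * g p.2)) := by
  refine Measure.prod_eq fun s t hs ht => ?_
  rw [withDensity_apply _ (hs.prod ht), Measure.volume_eq_prod, ← Measure.prod_restrict]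
  have h : ∀ p : ℝ × ℝ, ENNReal.ofReal (g p.1 * g p.2)
      = ENNReal.ofReal (g p.1) * ENNReal.ofReal (g p.2) :=
    fun p => ENNReal.ofReal_mul (gaussianPDFReal_nonneg 0 1 p.1)
  simp_rw [h]
  have hmg : Measurable fun x => ENNReal.ofReal (g x) :=
    (measurable_gaussianPDFReal 0 1).ennreal_ofReal
  rw [lintegral_prod_mul (f := fun x => ENNReal.ofReal (g x))
    (g := fun x => ENNReal.ofReal (g x)) hmg.aemeasurable hmg.aemeasurable]
  rw [gaussianReal_apply 0 one_ne_zero s, gaussianReal_apply 0 one_ne_zero t]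
  simp [gaussianPDF_def, g]

lemma measS {θ : ℝ} :
    MeasurableSet {p : ℝ × ℝ | 0 < p.1 ∧ 0 < Real.sin θ * p.1 + Real.cos θ * p.2} := by
  apply MeasurableSet.inter
  · exact measurableSet_lt measurable_const measurable_fst
  · exact measurableSet_lt measurable_const
      ((measurable_fst.const_mul _).add (measurable_snd.const_mul _))

lemma key {θ : ℝ} (hθ : θ ∈ Ioo (-(π/2)) (π/2)) :
    ∫ p : ℝ × ℝ in {p | 0 < p.1 ∧ 0 < Real.sin θ * p.1 + Real.cos θ * p.2},
      g p.1 * g p.2 = 1/4 + θ/(2*π) := by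
  set S := {p : ℝ × ℝ | 0 < p.1 ∧ 0 < Real.sin θ * p.1 + Real.cos θ * p.2} with hS
  rw [← integral_indicator measS,
    ← integral_comp_polarCoord_symm (S.indicator fun p => g p.1 * g p.2)]
  have hcong : EqOn
      (fun p : ℝ × ℝ => p.1 • S.indicator (fun q => g q.1 * g q.2) (polarCoord.symm p))
      (fun p : ℝ × ℝ => (p.1 * ((2*π)⁻¹ * Real.exp (-(p.1^2/2)))) *
        (Ioo (-θ) (π/2)).indicator (fun _ => (1:ℝ)) p.2)
      polarCoord.target := by
    rintro ⟨r, φ⟩ hp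
    rw [polarCoord_target] at hp
    obtain ⟨hr, hφ⟩ := hp
    simp only [polarCoord_symm_apply]
    have hsq : (r*Real.cos φ)^2 + (r*Real.sin φ)^2 = r^2 := by
      nlinarith [Real.sin_sq_add_cos_sq φ]
    have hgg : g (r * Real.cos φ) * g (r * Real.sin φ) = (2*π)⁻¹ * Real.exp (-(r^2/2)) := by
      rw [g_def, g_def, mul_mul_mul_comm, ← Real.exp_add, ← mul_inv,
        Real.mul_self_sqrt (by positivity : (0:ℝ) ≤ 2*π)]
      have h2 : -((r*Real.cos φ)^2/2) + -((r*Real.sin φ)^2/2) = -(r^2/2) := by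
        rw [← hsq]; ring
      rw [h2]
    have hmem : (r * Real.cos φ, r * Real.sin φ) ∈ S ↔ φ ∈ Ioo (-θ) (π/2) := by
      rw [hS]
      simp only [mem_setOf_eq]
      exact angle_iff hθ hr hφ
    by_cases h : φ ∈ Ioo (-θ) (π/2)
    · rw [Set.indicator_of_mem (hmem.mpr h), Set.indicator_of_mem h, hgg]
      simp [smul_eq_mul]
    · rw [Set.indicator_of_notMem (fun hc => h (hmem.mp hc)), Set.indicator_of_notMem h]
      simp
  rw [setIntegral_congr_fun (polarCoord.open_target.measurableSet) hcong]
  rw [polarCoord_target, Measure.volume_eq_prod, ← Measure.prod_restrict,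
    integral_prod_mul (f := fun r : ℝ => r * ((2*π)⁻¹ * Real.exp (-(r^2/2))))
      (g := (Ioo (-θ) (π/2)).indicator (fun _ => (1:ℝ)))]
  have hrad : ∫ r in Ioi (0:ℝ), r * ((2*π)⁻¹ * Real.exp (-(r^2/2))) = (2*π)⁻¹ := by
    have he : ∀ r : ℝ, r * ((2*π)⁻¹ * Real.exp (-(r^2/2)))
        = (2*π)⁻¹ * (r * Real.exp (-(r^2/2))) := fun r => by ring
    simp_rw [he]
    rw [MeasureTheory.integral_const_mul, radial_integral, mul_one]
  have hang : ∫ φ in Ioo (-π) π, (Ioo (-θ) (π/2)).indicator (fun _ => (1:ℝ)) φ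
      = π/2 + θ := by
    rw [setIntegral_indicator measurableSet_Ioo]
    rw [inter_eq_self_of_subset_right
      (Ioo_subset_Ioo (by linarith [hθ.1, hθ.2, Real.pi_pos]) (by linarith [Real.pi_pos]))]
    rw [setIntegral_const, Real.volume_real_Ioo_of_le (by linarith [hθ.1, Real.pi_pos]), smul_eq_mul, mul_one]
    ring
  rw [hrad, hang]
  have hπ : π ≠ 0 := Real.pi_ne_zero
  field_simp
  ring

end Sheppard

end SheppardAux

open Sheppard in
/-- Sheppard's formula: Let `(X, Y)` be standard bivariate normal with
correlation `ρ ∈ (-1,1)`, modeled via independent standard Gaussians `Z₁, Z₂` with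
`X = Z₁` and `Y = ρ Z₁ + √(1-ρ²) Z₂`. Then
`P(X > 0 ∧ Y > 0) = 1/4 + arcsin ρ / (2π)`. -/
theorem stmt5 {Ω : Type*} [MeasurableSpace Ω] (μ : Measure Ω) [IsProbabilityMeasure μ]
    (Z₁ Z₂ : Ω → ℝ) (hm₁ : Measurable Z₁) (hm₂ : Measurable Z₂)
    (h₁ : Measure.map Z₁ μ = gaussianReal 0 1)
    (h₂ : Measure.map Z₂ μ = gaussianReal 0 1)
    (hindep : IndepFun Z₁ Z₂ μ)
    (ρ : ℝ) (hρ : ρ ∈ Set.Ioo (-1 : ℝ) 1)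
    (X Y : Ω → ℝ) (hX : X = Z₁)
    (hY : Y = fun ω => ρ * Z₁ ω + Real.sqrt (1 - ρ ^ 2) * Z₂ ω) :
    (μ {ω | 0 < X ω ∧ 0 < Y ω}).toReal = 1 / 4 + Real.arcsin ρ / (2 * Real.pi) := by
  open Real Set in
  set θ := Real.arcsin ρ with hθdef
  have hθ : θ ∈ Ioo (-(π/2)) (π/2) :=
    ⟨Real.neg_pi_div_two_lt_arcsin.2 hρ.1, Real.arcsin_lt_pi_div_two.2 hρ.2⟩
  have hsin : Real.sin θ = ρ := Real.sin_arcsin hρ.1.le hρ.2.le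
  have hcos : Real.cos θ = Real.sqrt (1 - ρ ^ 2) := Real.cos_arcsin ρ
  set S := {p : ℝ × ℝ | 0 < p.1 ∧ 0 < Real.sin θ * p.1 + Real.cos θ * p.2} with hSdef
  have hmap : μ.map (fun ω => (Z₁ ω, Z₂ ω)) = (gaussianReal 0 1).prod (gaussianReal 0 1) := by
    exact ((indepFun_iff_map_prod_eq_prod_map_map hm₁.aemeasurable
      hm₂.aemeasurable).mp hindep).trans (by rw [h₁, h₂])
  have hset : {ω | 0 < X ω ∧ 0 < Y ω} = (fun ω => (Z₁ ω, Z₂ ω)) ⁻¹' S := by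
    ext ω
    simp only [hX, hY, hSdef, mem_setOf_eq, mem_preimage, hsin, hcos]
  rw [hset, ← Measure.map_apply (hm₁.prodMk hm₂) measS, hmap, gauss_prod,
    withDensity_apply _ measS]
  have hint : IntegrableOn (fun p : ℝ × ℝ => g p.1 * g p.2) S volume := by
    refine Integrable.integrableOn ?_
    rw [Measure.volume_eq_prod]
    exact (integrable_gaussianPDFReal 0 1).mul_prod (integrable_gaussianPDFReal 0 1)
  have hnn : 0 ≤ᵐ[volume.restrict S] fun p : ℝ × ℝ => g p.1 * g p.2 :=
    ae_of_all _ fun p => mul_nonneg (gaussianPDFReal_nonneg 0 1 p.1)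
      (gaussianPDFReal_nonneg 0 1 p.2)
  have h2π : (0:ℝ) < 2*π := by positivity
  have hmono := (div_le_div_iff_of_pos_right h2π).mpr hθ.1.le
  have heq : (-(π/2))/(2*π) = -(1/4) := by
    field_simp
    ring
  rw [← ofReal_integral_eq_lintegral_ofReal hint hnn, key hθ,
    ENNReal.toReal_ofReal (by linarith)]
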